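/- Every DM-irreducible balanced bipartite graph G = (V+, V-; E) with |V+| = |V-| = n ≥ 1 has a strongly balanced spanning tree, i.e., a spanning tree T such that some vertex r ∈ V+ has degree 1 in T and every other vertex in V+ has degree 2 in T. -/

import Mathlib

/-! Contracting every matching edge `(a, e a)` turns the strongly connected digraph `G_M` into a
strongly connected digraph on `V⁺` with an arc `a → a'` whenever `(a, e a') ∈ E`. Shortest paths
to a root `r` give every `a ≠ r` a parent `p a` with `(a, e (p a)) ∈ E`. The matching edges together
with the edges `(a, e (p a))` span a connected graph, since following parents leads to `r`; its
`1 + 2 (n - 1) = 2 n - 1` edges, counted by their degrees on `V⁺`, make it a tree. -/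

open Sum

/-- The simple graph on `α ⊕ β` determined by an edge set `T ⊆ α × β`. -/
def sg {α β : Type*} (T : Set (α × β)) : SimpleGraph (α ⊕ β) :=
  SimpleGraph.fromRel (fun u v => ∃ a b, u = inl a ∧ v = inr b ∧ (a, b) ∈ T)

/-- Degree of `a ∈ V⁺` in the edge set `T`. -/
noncomputable def degP {α β : Type*} (T : Set (α × β)) (a : α) : ℕ :=
  {b : β | (a, b) ∈ T}.ncard

/-- Arc relation of the auxiliary digraph. -/
def Step {α β : Type*} (E M : Set (α × β)) : (α ⊕ β) → (α ⊕ β) → Prop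
  | inl a, inr b => (a, b) ∈ E
  | inr b, inl a => (a, b) ∈ M
  | _, _ => False

def StronglyConnected {V : Type*} (R : V → V → Prop) : Prop :=
  ∀ u v : V, Relation.ReflTransGen R u v

def IsPerfectMatching {α β : Type*} (E M : Set (α × β)) : Prop :=
  M ⊆ E ∧ (∀ a : α, ∃! b : β, (a, b) ∈ M) ∧ (∀ b : β, ∃! a : α, (a, b) ∈ M)

def DMIrreducible {α β : Type*} (E : Set (α × β)) : Prop :=
  ∃ M, IsPerfectMatching E M ∧ StronglyConnected (Step E M)

namespace Relation

theorem exists_parent_of_forall_reflTransGen {α : Type*} {R : α → α → Prop} {r : α}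
    (h : ∀ a, ReflTransGen R a r) :
    ∃ (p : α → α) (d : α → ℕ), ∀ a, a ≠ r → R a (p a) ∧ d (p a) < d a := by
  classical
  have hchain : ∀ a, ∃ n, ∃ l : List α,
      l.length = n ∧ (a :: l).IsChain R ∧ (a :: l).getLast (List.cons_ne_nil _ _) = r :=
    fun a => by
      obtain ⟨l, hl⟩ := List.exists_isChain_cons_of_relationReflTransGen (h a)
      exact ⟨l.length, l, rfl, hl⟩
  let d a := Nat.find (hchain a)
  have hdesc : ∀ a, a ≠ r → ∃ a', R a a' ∧ d a' < d a := by
    intro a ha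
    obtain ⟨l, hlen, hl, hlast⟩ := Nat.find_spec (hchain a)
    cases l with
    | nil => exact absurd hlast ha
    | cons a' l =>
      refine ⟨a', List.IsChain.rel_head? hl rfl, ?_⟩
      have : d a' ≤ l.length :=
        Nat.find_min' (hchain a') ⟨l, rfl, hl.tail, by rwa [List.getLast_cons_cons] at hlast⟩
      have hlen : l.length + 1 = d a := hlen
      omega
  choose! p hp using hdesc
  exact ⟨p, d, hp⟩

end Relation

theorem IsPerfectMatching.exists_equiv {α β : Type*} {E M : Set (α × β)}
    (hM : IsPerfectMatching E M) : ∃ e : α ≃ β, ∀ a b, (a, b) ∈ M ↔ e a = b := by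
  obtain ⟨-, hα, hβ⟩ := hM
  choose m hm hm_unique using hα
  refine ⟨Equiv.ofBijective m ⟨fun a a' h => ?_, fun b => ?_⟩,
    fun a b => ⟨fun h => (hm_unique a b h).symm, fun h => h ▸ hm a⟩⟩
  · exact (hβ (m a)).unique (hm a) (h ▸ hm a')
  · obtain ⟨a, ha, -⟩ := hβ b
    exact ⟨a, (hm_unique a b ha).symm⟩

theorem StronglyConnected.reflTransGen_contract {α β : Type*} {E M : Set (α × β)} {e : α ≃ β}
    (he : ∀ a b, (a, b) ∈ M ↔ e a = b) (h : StronglyConnected (Step E M)) (a a' : α) :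
    Relation.ReflTransGen (fun a a' => (a, e a') ∈ E) a a' := by
  refine (h (inl a) (inl a')).lift' (Sum.elim id e.symm) fun u v huv => ?_
  match u, v, huv with
  | inl a, inr b, huv => exact .single (by simpa [Step] using huv)
  | inr b, inl a, huv => simpa [← (he a b).1 huv, Function.onFun] using .refl

theorem ncard_eq_sum_degP {α β : Type*} [Fintype α] [Finite β] (T : Set (α × β)) :
    T.ncard = ∑ a, degP T a := by
  let fibers : T ≃ Σ a, {b | (a, b) ∈ T} :=
    { toFun x := ⟨x.1.1, x.1.2, x.2⟩
      invFun s := ⟨(s.1, s.2.1), s.2.2⟩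
      left_inv _ := rfl
      right_inv _ := rfl }
  rw [← Nat.card_coe_set_eq, Nat.card_congr fibers, Nat.card_sigma]
  simp only [degP, Nat.card_coe_set_eq]

theorem sg_adj_inl_inr {α β : Type*} {T : Set (α × β)} {a : α} {b : β} (h : (a, b) ∈ T) :
    (sg T).Adj (inl a) (inr b) := by
  simp only [sg, SimpleGraph.fromRel_adj]
  exact ⟨by simp, .inl ⟨a, b, rfl, rfl, h⟩⟩

theorem edgeSet_sg {α β : Type*} (T : Set (α × β)) :
    (sg T).edgeSet = (fun x => s(inl x.1, inr x.2)) '' T := by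
  ext ⟨u, v⟩
  constructor
  · intro huv
    simp only [SimpleGraph.mem_edgeSet, sg, SimpleGraph.fromRel_adj] at huv
    obtain ⟨-, ⟨a, b, rfl, rfl, h⟩ | ⟨a, b, rfl, rfl, h⟩⟩ := huv
    · exact ⟨(a, b), h, rfl⟩
    · exact ⟨(a, b), h, Sym2.eq_swap⟩
  · rintro ⟨⟨a, b⟩, h, huv⟩
    rw [← huv]
    exact sg_adj_inl_inr h

theorem card_edgeSet_sg {α β : Type*} (T : Set (α × β)) : Nat.card (sg T).edgeSet = T.ncard := by
  rw [Nat.card_coe_set_eq, edgeSet_sg, Set.ncard_image_of_injective]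
  rintro ⟨a, b⟩ ⟨a', b'⟩ h
  simpa using h

section TreeEdges

variable {α β : Type*} (e : α ≃ β) (p : α → α) (r : α)

def treeEdges : Set (α × β) := {x | x.2 = e x.1 ∨ (x.1 ≠ r ∧ x.2 = e (p x.1))}

theorem degP_treeEdges_root : degP (treeEdges e p r) r = 1 := by
  simp [degP, treeEdges]

theorem degP_treeEdges_of_ne {a : α} (ha : a ≠ r) (hpa : p a ≠ a) :
    degP (treeEdges e p r) a = 2 := by
  have : {b | (a, b) ∈ treeEdges e p r} = {e a, e (p a)} := by
    ext b
    simp [treeEdges, ha]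
  rw [degP, this, Set.ncard_pair (e.injective.ne hpa.symm)]

variable {e p r}

theorem treeEdges_subset {E : Set (α × β)} (hmatch : ∀ a, (a, e a) ∈ E)
    (hparent : ∀ a, a ≠ r → (a, e (p a)) ∈ E) : treeEdges e p r ⊆ E := by
  rintro ⟨a, b⟩ (hb | ⟨ha, hb⟩) <;> dsimp only at hb <;> subst hb
  exacts [hmatch a, hparent a ha]

theorem connected_sg_treeEdges {d : α → ℕ} (hd : ∀ a, a ≠ r → d (p a) < d a) :
    (sg (treeEdges e p r)).Connected := by
  have hroot : ∀ n a, d a = n → (sg (treeEdges e p r)).Reachable (inl a) (inl r) := by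
    intro n
    induction n using Nat.strong_induction_on with
    | _ n ih =>
      rintro a rfl
      by_cases ha : a = r
      · rw [ha]
      have hup : (sg (treeEdges e p r)).Adj (inl a) (inr (e (p a))) :=
        sg_adj_inl_inr (.inr ⟨ha, rfl⟩)
      have hdown : (sg (treeEdges e p r)).Adj (inl (p a)) (inr (e (p a))) :=
        sg_adj_inl_inr (.inl rfl)
      exact hup.reachable.trans (hdown.symm.reachable.trans (ih _ (hd a ha) _ rfl))
  have hreach : ∀ u, (sg (treeEdges e p r)).Reachable u (inl r) := by
    rintro (a | b)
    · exact hroot _ a rfl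
    · have hmatch : (sg (treeEdges e p r)).Adj (inl (e.symm b)) (inr b) :=
        sg_adj_inl_inr (.inl (e.apply_symm_apply b).symm)
      exact hmatch.symm.reachable.trans (hroot _ _ rfl)
  have : Nonempty (α ⊕ β) := ⟨inl r⟩
  exact ⟨fun u v => (hreach u).trans (hreach v).symm⟩

theorem isTree_sg_treeEdges [Fintype α] {d : α → ℕ} (hd : ∀ a, a ≠ r → d (p a) < d a) :
    (sg (treeEdges e p r)).IsTree := by
  classical
  have : Finite β := .of_equiv α e
  have hp : ∀ a, a ≠ r → p a ≠ a := fun a ha hpa => (hd a ha).ne (congrArg d hpa)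
  have hedges : (treeEdges e p r).ncard + 1 = 2 * Fintype.card α := by
    rw [ncard_eq_sum_degP, ← Finset.add_sum_erase _ _ (Finset.mem_univ r),
      degP_treeEdges_root, Finset.sum_congr rfl fun a ha =>
        degP_treeEdges_of_ne e p r (Finset.ne_of_mem_erase ha) (hp a (Finset.ne_of_mem_erase ha)),
      Finset.sum_const, Finset.card_erase_of_mem (Finset.mem_univ r), Finset.card_univ]
    have : 0 < Fintype.card α := Fintype.card_pos_iff.2 ⟨r⟩
    simp only [smul_eq_mul]
    omega
  rw [SimpleGraph.isTree_iff_connected_and_card, card_edgeSet_sg, Nat.card_sum,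
    ← Nat.card_congr e, Nat.card_eq_fintype_card, hedges]
  exact ⟨connected_sg_treeEdges hd, by ring⟩

end TreeEdges

theorem stmt10_general {α β : Type*} [Fintype α]
    (hn : 1 ≤ Fintype.card α)
    (E : Set (α × β)) (hDM : DMIrreducible E) :
    ∃ T : Set (α × β), T ⊆ E ∧ (sg T).IsTree ∧
      ∃ r : α, degP T r = 1 ∧ ∀ a : α, a ≠ r → degP T a = 2 := by
  obtain ⟨M, hM, hSC⟩ := hDM
  obtain ⟨e, he⟩ := hM.exists_equiv
  obtain ⟨r⟩ := Fintype.card_pos_iff.1 hn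
  obtain ⟨p, d, hpd⟩ := Relation.exists_parent_of_forall_reflTransGen
    fun a => hSC.reflTransGen_contract he a r
  have hd : ∀ a, a ≠ r → d (p a) < d a := fun a ha => (hpd a ha).2
  refine ⟨treeEdges e p r, ?_, isTree_sg_treeEdges hd, r, degP_treeEdges_root e p r,
    fun a ha => degP_treeEdges_of_ne e p r ha fun hpa => (hd a ha).ne (congrArg d hpa)⟩
  exact treeEdges_subset (fun a => hM.1 ((he a _).2 rfl)) fun a ha => (hpd a ha).1

theorem stmt10 {α β : Type*} [Fintype α] [Fintype β]
    (hbal : Fintype.card α = Fintype.card β) (hn : 1 ≤ Fintype.card α)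
    (E : Set (α × β)) (hDM : DMIrreducible E) :
    ∃ T : Set (α × β), T ⊆ E ∧ (sg T).IsTree ∧
      ∃ r : α, degP T r = 1 ∧ ∀ a : α, a ≠ r → degP T a = 2 :=
  stmt10_general hn E hDM
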